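/- Let m ≥ 1, let D_a ⊆ ℂ^m be a closed and bounded set such that for every M ∈ D_a all m roots of the polynomial P(M) have strictly negative real part, and let D_w ⊆ ℂ^m be a bounded set. Then there exist C̃ ≥ 0 and κ > 0 such that for every M ∈ D_a, every N ∈ D_w, and every solution w of the Cauchy problem with coefficients M and initial data N, one has |w^{(i)}(ξ)| ≤ C̃ (1 + ξ^{m−1}) e^{−κ ξ} for all i ∈ {0, …, m−1} and all ξ ≥ 0. -/

import Mathlib

open Polynomial

/-- The characteristic polynomial `λ^m - a_{m-1} λ^{m-1} - ⋯ - a_1 λ - a_0`. -/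
noncomputable def charPoly (m : ℕ) (M : Fin m → ℂ) : Polynomial ℂ :=
  X ^ m - ∑ j : Fin m, C (M j) * X ^ (j : ℕ)

/-- `w` is a solution of the Cauchy problem with coefficients `M` and initial data `N`. -/
def IsCauchySolution (m : ℕ) (M N : Fin m → ℂ) (w : ℝ → ℂ) : Prop :=
  (∀ i < m, Differentiable ℝ (iteratedDeriv i w)) ∧
  (∀ ξ : ℝ, 0 ≤ ξ → iteratedDeriv m w ξ = ∑ j : Fin m, M j * iteratedDeriv (j : ℕ) w ξ) ∧
  (∀ j : Fin m, iteratedDeriv (j : ℕ) w 0 = N j)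

/-!
Over `ℂ` the characteristic polynomial factors as `∏ (X - r)`, so the equation reads
`∏ (D - r) w = 0`. Peeling off one factor, `u = w' - r w` solves the equation of the remaining
factors, and `w` is recovered from `w' = r w + u` by variation of constants: if `Re r ≤ -2κ` and
`u` decays like `e^{-κξ}`, so does `w`. Induction on the number of factors bounds
`w, …, w^{(m-1)}` by `C e^{-κξ}`, with `C` depending only on `κ`, on a bound for the roots and
on a bound for the initial data. Halving the spectral margin absorbs the polynomial factors, so
the estimate even holds without `1 + ξ^{m-1}`.

Uniformity over `D_a` comes from compactness: the pairs `(M, z)` with `M ∈ D_a` and `P(M)(z) = 0`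
form a compact set (Cauchy's bound confines the roots), on which `Re z` has a negative maximum.
-/

open Finset

open Complex in
theorem norm_le_of_deriv_eq_mul_add {v u : ℝ → ℂ} {r : ℂ} {κ δ A : ℝ} (hδ : 0 < δ)
    (hre : r.re ≤ -(κ + δ)) (hv : Differentiable ℝ v)
    (hv' : ∀ t, 0 ≤ t → deriv v t = r * v t + u t)
    (hu : ∀ t, 0 ≤ t → ‖u t‖ ≤ A * Real.exp (-κ * t)) {ξ : ℝ} (hξ : 0 ≤ ξ) :
    ‖v ξ‖ ≤ (‖v 0‖ + A / δ) * Real.exp (-κ * ξ) := by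
  set c := -r.re - κ with hc_def
  have hc : δ ≤ c := by linarith
  have hc₀ : 0 < c := hδ.trans_le hc
  have hA : 0 ≤ A := by simpa using (norm_nonneg _).trans (hu 0 le_rfl)
  -- `e^{-rt} v(t)` has derivative `e^{-rt} u(t)`; its norm is fenced by the solution
  -- `‖v 0‖ + (A / c) e^{ct}` of the majorant equation.
  have hf (t : ℝ) (ht : 0 ≤ t) :
      HasDerivAt (fun t : ℝ => cexp (-(r * t)) * v t) (cexp (-(r * t)) * u t) t := by
    have he : HasDerivAt (fun t : ℝ => cexp (-(r * t))) (cexp (-(r * t)) * -r) t := by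
      simpa using ((hasDerivAt_id (t : ℂ)).const_mul r).neg.cexp.comp_ofReal
    exact (he.mul (hv t).hasDerivAt).congr_deriv (by rw [hv' t ht]; ring)
  have hf' (t : ℝ) (ht : 0 ≤ t) : ‖cexp (-(r * t)) * u t‖ ≤ A * Real.exp (c * t) := by
    rw [norm_mul, Complex.norm_exp]
    calc Real.exp (-(r * t)).re * ‖u t‖
        ≤ Real.exp (-(r.re * t)) * (A * Real.exp (-κ * t)) := by
          gcongr
          · simp
          · exact hu t ht
      _ = A * Real.exp (c * t) := by rw [mul_left_comm, ← Real.exp_add, hc_def]; ring_nf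
  have hB (t : ℝ) :
      HasDerivAt (fun t => ‖v 0‖ + A / c * Real.exp (c * t)) (A * Real.exp (c * t)) t :=
    ((((hasDerivAt_id' t).const_mul c).exp.const_mul (A / c)).const_add ‖v 0‖).congr_deriv
      (by field_simp)
  have h0 : ‖cexp (-(r * (0 : ℝ))) * v 0‖ ≤ ‖v 0‖ + A / c * Real.exp (c * 0) := by
    simpa using div_nonneg hA hc₀.le
  have key := image_norm_le_of_norm_deriv_right_le_deriv_boundary
    (fun t ht => (hf t ht.1).continuousAt.continuousWithinAt)
    (fun t ht => (hf t ht.1).hasDerivWithinAt) h0 hB (fun t ht => hf' t ht.1) ⟨hξ, le_rfl⟩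
  have hv_eq : ‖v ξ‖ = Real.exp (r.re * ξ) * ‖cexp (-(r * ξ)) * v ξ‖ := by
    rw [norm_mul, Complex.norm_exp, ← mul_assoc, ← Real.exp_add]
    simp
  calc ‖v ξ‖ ≤ Real.exp (r.re * ξ) * (‖v 0‖ + A / c * Real.exp (c * ξ)) := by
        rw [hv_eq]; gcongr
    _ = ‖v 0‖ * Real.exp (r.re * ξ) + A / c * Real.exp (-κ * ξ) := by
        rw [mul_add, mul_left_comm, ← Real.exp_add, hc_def]; ring_nf
    _ ≤ ‖v 0‖ * Real.exp (-κ * ξ) + A / δ * Real.exp (-κ * ξ) := by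
        gcongr; nlinarith
    _ = (‖v 0‖ + A / δ) * Real.exp (-κ * ξ) := by ring

noncomputable def derivSub (r : ℂ) (w : ℝ → ℂ) (ξ : ℝ) : ℂ := deriv w ξ - r * w ξ

noncomputable def polyDiffOp (p : ℂ[X]) (w : ℝ → ℂ) (ξ : ℝ) : ℂ :=
  ∑ j ∈ range (p.natDegree + 1), p.coeff j * iteratedDeriv j w ξ

theorem polyDiffOp_eq_sum_range {p : ℂ[X]} {N : ℕ} (hN : p.natDegree < N) (w : ℝ → ℂ) (ξ : ℝ) :
    polyDiffOp p w ξ = ∑ j ∈ range N, p.coeff j * iteratedDeriv j w ξ := by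
  refine sum_subset (range_subset_range.2 hN) fun j _ hj => ?_
  rw [coeff_eq_zero_of_natDegree_lt (by simpa using hj), zero_mul]

theorem iteratedDeriv_derivSub {w : ℝ → ℂ} (r : ℂ) {i : ℕ}
    (hw : ∀ j ≤ i, Differentiable ℝ (iteratedDeriv j w)) :
    iteratedDeriv i (derivSub r w) =
      fun ξ => iteratedDeriv (i + 1) w ξ - r * iteratedDeriv i w ξ := by
  induction i with
  | zero => ext ξ; simp [derivSub, iteratedDeriv_one]
  | succ i ih =>
    ext ξ
    have hi := hw (i + 1) le_rfl
    have hi' := hw i (by omega)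
    rw [iteratedDeriv_succ, ih fun j hj => hw j (by omega),
      deriv_fun_sub (hi ξ) ((hi' ξ).const_mul r), deriv_const_mul r (hi' ξ)]
    simp only [iteratedDeriv_succ]

theorem differentiable_iteratedDeriv_derivSub {w : ℝ → ℂ} (r : ℂ) {i : ℕ}
    (hw : ∀ j ≤ i + 1, Differentiable ℝ (iteratedDeriv j w)) :
    Differentiable ℝ (iteratedDeriv i (derivSub r w)) := by
  rw [iteratedDeriv_derivSub r fun j hj => hw j (by omega)]
  exact (hw (i + 1) le_rfl).sub ((hw i (by omega)).const_mul r)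

theorem polyDiffOp_X_sub_C_mul {w : ℝ → ℂ} (r : ℂ) (q : ℂ[X])
    (hw : ∀ j ≤ q.natDegree, Differentiable ℝ (iteratedDeriv j w)) (ξ : ℝ) :
    polyDiffOp ((X - C r) * q) w ξ = polyDiffOp q (derivSub r w) ξ := by
  have htop : q.coeff (q.natDegree + 1) = 0 := coeff_eq_zero_of_natDegree_lt (lt_add_one _)
  have hshift := sum_range_succ' (fun j => q.coeff j * iteratedDeriv j w ξ) (q.natDegree + 1)
  rw [sum_range_succ, htop, zero_mul, add_zero] at hshift
  have hdeg : ((X - C r) * q).natDegree < q.natDegree + 2 := by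
    have := natDegree_mul_le (p := X - C r) (q := q)
    rw [natDegree_X_sub_C] at this
    omega
  have hrhs : polyDiffOp q (derivSub r w) ξ = ∑ j ∈ range (q.natDegree + 1),
      q.coeff j * (iteratedDeriv (j + 1) w ξ - r * iteratedDeriv j w ξ) :=
    sum_congr rfl fun j hj => by
      rw [iteratedDeriv_derivSub r fun k hk => hw k (by rw [mem_range] at hj; omega)]
  rw [polyDiffOp_eq_sum_range hdeg, sum_range_succ', hrhs]
  simp only [coeff_X_sub_C_mul, mul_coeff_zero, coeff_sub, coeff_X_zero, coeff_C_zero]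
  simp only [sub_mul, mul_sub, sum_sub_distrib, mul_assoc, mul_left_comm (q.coeff _) r,
    ← mul_sum]
  rw [hshift]
  ring

theorem polyDiffOp_one (w : ℝ → ℂ) (ξ : ℝ) : polyDiffOp 1 w ξ = w ξ := by
  simp [polyDiffOp]

theorem norm_iteratedDeriv_le_of_derivSub {w : ℝ → ℂ} {r : ℂ} {κ δ R A B : ℝ} {n : ℕ}
    (hδ : 0 < δ) (hr : ‖r‖ ≤ R) (hre : r.re ≤ -(κ + δ))
    (hw : ∀ i ≤ n, Differentiable ℝ (iteratedDeriv i w)) (hw₀ : ‖w 0‖ ≤ B)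
    (hu₀ : ∀ ξ, 0 ≤ ξ → ‖derivSub r w ξ‖ ≤ A * Real.exp (-κ * ξ))
    (hu : ∀ i < n, ∀ ξ, 0 ≤ ξ → ‖iteratedDeriv i (derivSub r w) ξ‖ ≤ A * Real.exp (-κ * ξ))
    {i : ℕ} (hi : i ≤ n) {ξ : ℝ} (hξ : 0 ≤ ξ) :
    ‖iteratedDeriv i w ξ‖ ≤ (1 + R) ^ i * (B + A * (1 + 1 / δ)) * Real.exp (-κ * ξ) := by
  have hA : 0 ≤ A := by simpa using (norm_nonneg _).trans (hu₀ 0 le_rfl)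
  have hR : 0 ≤ R := (norm_nonneg _).trans hr
  induction i with
  | zero =>
    have hw' : Differentiable ℝ w := by simpa using hw 0 (Nat.zero_le _)
    calc ‖iteratedDeriv 0 w ξ‖ ≤ (‖w 0‖ + A / δ) * Real.exp (-κ * ξ) := by
          simpa using norm_le_of_deriv_eq_mul_add hδ hre hw'
            (fun t _ => by simp only [derivSub]; ring) hu₀ hξ
      _ ≤ (1 + R) ^ 0 * (B + A * (1 + 1 / δ)) * Real.exp (-κ * ξ) := by
          gcongr
          rw [pow_zero, one_mul, mul_add, mul_one, mul_one_div]
          linarith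
  | succ i ih =>
    have hsplit : iteratedDeriv (i + 1) w ξ =
        iteratedDeriv i (derivSub r w) ξ + r * iteratedDeriv i w ξ := by
      rw [iteratedDeriv_derivSub r fun j hj => hw j (by omega)]; ring
    have hD : A ≤ (1 + R) ^ i * (B + A * (1 + 1 / δ)) := by
      have : A ≤ B + A * (1 + 1 / δ) := by
        have := (norm_nonneg _).trans hw₀
        nlinarith [div_pos one_pos hδ]
      exact this.trans (le_mul_of_one_le_left (by linarith) (one_le_pow₀ (by linarith)))
    calc ‖iteratedDeriv (i + 1) w ξ‖
        ≤ A * Real.exp (-κ * ξ) +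
            R * ((1 + R) ^ i * (B + A * (1 + 1 / δ)) * Real.exp (-κ * ξ)) := by
          rw [hsplit]
          refine (norm_add_le _ _).trans (add_le_add (hu i (by omega) ξ hξ) ?_)
          rw [norm_mul]
          exact mul_le_mul hr (ih (by omega)) (norm_nonneg _) hR
      _ ≤ (1 + R) ^ (i + 1) * (B + A * (1 + 1 / δ)) * Real.exp (-κ * ξ) := by
          rw [pow_succ]
          nlinarith [Real.exp_pos (-κ * ξ)]

theorem exists_norm_iteratedDeriv_le_of_polyDiffOp_eq_zero {κ δ R : ℝ} (hδ : 0 < δ)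
    (hR : 0 ≤ R) (n : ℕ) : ∃ K : ℝ, 0 ≤ K ∧ ∀ s : Multiset ℂ, Multiset.card s = n →
      (∀ r ∈ s, ‖r‖ ≤ R ∧ r.re ≤ -(κ + δ)) →
      ∀ w : ℝ → ℂ, (∀ i < n, Differentiable ℝ (iteratedDeriv i w)) →
      (∀ ξ, 0 ≤ ξ → polyDiffOp (s.map (X - C ·)).prod w ξ = 0) →
      ∀ B : ℝ, (∀ j < n, ‖iteratedDeriv j w 0‖ ≤ B) →
      ∀ i < n, ∀ ξ, 0 ≤ ξ → ‖iteratedDeriv i w ξ‖ ≤ K * B * Real.exp (-κ * ξ) := by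
  induction n with
  | zero => exact ⟨0, le_rfl, by simp⟩
  | succ n ih =>
    obtain ⟨K, hK, hdecay⟩ := ih
    refine ⟨(1 + R) ^ n * (1 + K * (1 + R) * (1 + 1 / δ)), by positivity, ?_⟩
    intro s hs hroots w hw hP B hB i hi ξ hξ
    obtain ⟨r, t, rfl, ht⟩ := Multiset.card_eq_succ_iff.1 hs
    have hr := hroots r (Multiset.mem_cons_self r t)
    have hB₀ : 0 ≤ B := (norm_nonneg _).trans (hB 0 n.succ_pos)
    have hPu (ξ : ℝ) (hξ : 0 ≤ ξ) :
        polyDiffOp (t.map (X - C ·)).prod (derivSub r w) ξ = 0 := by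
      rw [← polyDiffOp_X_sub_C_mul r _ (fun j hj => hw j (by
        rw [natDegree_multiset_prod_X_sub_C_eq_card] at hj; omega))]
      simpa using hP ξ hξ
    have hu_init (j : ℕ) (hj : j < n) :
        ‖iteratedDeriv j (derivSub r w) 0‖ ≤ (1 + R) * B := by
      rw [iteratedDeriv_derivSub r fun k hk => hw k (by omega)]
      calc _ ≤ ‖iteratedDeriv (j + 1) w 0‖ + ‖r‖ * ‖iteratedDeriv j w 0‖ :=
            (norm_sub_le _ _).trans_eq (by rw [norm_mul])
        _ ≤ B + R * B := by gcongr; exacts [hB _ (by omega), hr.1, hB _ (by omega)]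
        _ = (1 + R) * B := by ring
    have hu := hdecay t ht (fun r' hr' => hroots r' (Multiset.mem_cons_of_mem hr'))
      (derivSub r w)
      (fun i hi => differentiable_iteratedDeriv_derivSub r fun j hj => hw j (by omega)) hPu _
      hu_init
    have hu₀ (ξ : ℝ) (hξ : 0 ≤ ξ) :
        ‖derivSub r w ξ‖ ≤ K * ((1 + R) * B) * Real.exp (-κ * ξ) := by
      rcases n with _ | n
      · rw [Multiset.card_eq_zero.1 ht] at hPu
        have := hPu ξ hξ
        rw [Multiset.map_zero, Multiset.prod_zero, polyDiffOp_one] at this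
        rw [this, norm_zero]
        positivity
      · simpa using hu 0 n.succ_pos ξ hξ
    calc ‖iteratedDeriv i w ξ‖
        ≤ (1 + R) ^ i * (B + K * ((1 + R) * B) * (1 + 1 / δ)) * Real.exp (-κ * ξ) :=
          norm_iteratedDeriv_le_of_derivSub hδ hr.1 hr.2 (fun j hj => hw j (by omega))
            (by simpa using hB 0 n.succ_pos) hu₀ hu (by omega) hξ
      _ ≤ (1 + R) ^ n * (B + K * ((1 + R) * B) * (1 + 1 / δ)) * Real.exp (-κ * ξ) := by
          gcongr
          · linarith
          · omega
      _ = (1 + R) ^ n * (1 + K * (1 + R) * (1 + 1 / δ)) * B * Real.exp (-κ * ξ) := by ring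

section CharPoly

variable (m : ℕ) (M : Fin m → ℂ)

theorem charPoly_coeff_of_lt {j : ℕ} (hj : j < m) : (charPoly m M).coeff j = -M ⟨j, hj⟩ := by
  simp only [charPoly, coeff_sub, coeff_X_pow, if_neg hj.ne, finsetSum_coeff, coeff_C_mul_X_pow]
  rw [sum_eq_single ⟨j, hj⟩ (fun b _ hb => if_neg fun h => hb (Fin.ext h.symm)) (by simp)]
  simp

theorem charPoly_monic : (charPoly m M).Monic := monic_X_pow_sub (degree_sum_fin_lt M)

theorem charPoly_natDegree : (charPoly m M).natDegree = m := by
  have hlt : (∑ j : Fin m, C (M j) * X ^ (j : ℕ)).degree < (X ^ m : ℂ[X]).degree := by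
    rw [degree_X_pow]
    exact degree_sum_fin_lt M
  exact natDegree_eq_of_degree_eq_some
    ((degree_sub_eq_left_of_degree_lt hlt).trans (degree_X_pow m))

theorem charPoly_eq_prod_roots : charPoly m M = ((charPoly m M).roots.map (X - C ·)).prod :=
  (IsAlgClosed.splits _).eq_prod_roots_of_monic (charPoly_monic m M)

theorem card_roots_charPoly : Multiset.card (charPoly m M).roots = m :=
  IsAlgClosed.card_roots_eq_natDegree.trans (charPoly_natDegree m M)

theorem mem_roots_charPoly_iff {z : ℂ} :
    z ∈ (charPoly m M).roots ↔ z ^ m = ∑ j : Fin m, M j * z ^ (j : ℕ) := by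
  rw [mem_roots (charPoly_monic m M).ne_zero, IsRoot, charPoly, eval_sub, sub_eq_zero]
  simp [eval_finsetSum]

theorem norm_le_of_mem_roots_charPoly {z : ℂ} (hz : z ∈ (charPoly m M).roots) :
    ‖z‖ ≤ ‖M‖ + 1 := by
  have h := (mem_roots'.1 hz).2.norm_lt_cauchyBound (mem_roots'.1 hz).1
  simp only [cauchyBound, charPoly_natDegree, (charPoly_monic m M).leadingCoeff, nnnorm_one,
    div_one] at h
  have hsup : (range m).sup (fun j => ‖(charPoly m M).coeff j‖₊) ≤ ‖M‖₊ :=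
    Finset.sup_le fun j hj => by
      rw [charPoly_coeff_of_lt m M (mem_range.1 hj), nnnorm_neg]
      exact nnnorm_le_pi_nnnorm M _
  have hz' : ‖z‖₊ ≤ ‖M‖₊ + 1 := h.le.trans (by gcongr)
  exact_mod_cast hz'

theorem polyDiffOp_charPoly (w : ℝ → ℂ) (ξ : ℝ) :
    polyDiffOp (charPoly m M) w ξ =
      iteratedDeriv m w ξ - ∑ j : Fin m, M j * iteratedDeriv j w ξ := by
  rw [polyDiffOp, charPoly_natDegree, sum_range_succ, ← Fin.sum_univ_eq_sum_range]
  have hlead := (charPoly_monic m M).coeff_natDegree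
  rw [charPoly_natDegree] at hlead
  simp [charPoly_coeff_of_lt, hlead]
  ring

end CharPoly

theorem IsCauchySolution.polyDiffOp_charPoly_eq_zero {m : ℕ} {M N : Fin m → ℂ} {w : ℝ → ℂ}
    (hw : IsCauchySolution m M N w) {ξ : ℝ} (hξ : 0 ≤ ξ) :
    polyDiffOp (charPoly m M) w ξ = 0 := by
  rw [polyDiffOp_charPoly, hw.2.1 ξ hξ, sub_self]

theorem exists_uniform_bounds_roots_charPoly {m : ℕ} {Da : Set (Fin m → ℂ)} (hc : IsClosed Da)
    (hb : Bornology.IsBounded Da) (hroots : ∀ M ∈ Da, ∀ z ∈ (charPoly m M).roots, z.re < 0) :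
    ∃ R κ : ℝ, 0 ≤ R ∧ 0 < κ ∧
      ∀ M ∈ Da, ∀ z ∈ (charPoly m M).roots, ‖z‖ ≤ R ∧ z.re ≤ -(κ + κ) := by
  obtain ⟨A, hA₀, hA⟩ := hb.exists_pos_norm_le
  set K := {p : (Fin m → ℂ) × ℂ | p.1 ∈ Da ∧ p.2 ^ m = ∑ j : Fin m, p.1 j * p.2 ^ (j : ℕ)}
  have hK : IsCompact K := by
    refine Metric.isCompact_of_isClosed_isBounded
      ((hc.preimage continuous_fst).inter (isClosed_eq (by fun_prop) (by fun_prop)))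
      ((hb.prod (Metric.isBounded_closedBall (x := 0) (r := A + 1))).subset ?_)
    rintro ⟨M, z⟩ ⟨hM, hz⟩
    have hz' := norm_le_of_mem_roots_charPoly m M ((mem_roots_charPoly_iff m M).2 hz)
    exact ⟨hM, by simpa using hz'.trans (by linarith [hA M hM])⟩
  obtain ⟨a, ha, hle⟩ := hK.exists_forall_le' (f := fun p => -p.2.re) (by fun_prop) (a := 0)
    fun p hp => neg_pos.2 (hroots p.1 hp.1 p.2 ((mem_roots_charPoly_iff m p.1).2 hp.2))
  refine ⟨A + 1, a / 2, by linarith, by linarith, fun M hM z hz => ⟨?_, ?_⟩⟩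
  · linarith [norm_le_of_mem_roots_charPoly m M hz, hA M hM]
  · linarith [hle (M, z) ⟨hM, (mem_roots_charPoly_iff m M).1 hz⟩]

theorem uniform_exp_decay_estimate_general (m : ℕ)
    (Da : Set (Fin m → ℂ)) (hDaClosed : IsClosed Da) (hDaBdd : Bornology.IsBounded Da)
    (hroots : ∀ M ∈ Da, ∀ z ∈ (charPoly m M).roots, z.re < 0)
    (Dw : Set (Fin m → ℂ)) (hDwBdd : Bornology.IsBounded Dw) :
    ∃ Ct : ℝ, 0 ≤ Ct ∧ ∃ κ : ℝ, 0 < κ ∧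
      ∀ M ∈ Da, ∀ N ∈ Dw,
        ∀ w : ℝ → ℂ, IsCauchySolution m M N w →
          ∀ i < m, ∀ ξ : ℝ, 0 ≤ ξ →
            ‖iteratedDeriv i w ξ‖ ≤ Ct * (1 + ξ ^ (m - 1)) * Real.exp (-κ * ξ) := by
  obtain ⟨R, κ, hR, hκ, hbounds⟩ := exists_uniform_bounds_roots_charPoly hDaClosed hDaBdd hroots
  obtain ⟨B, hB₀, hB⟩ := hDwBdd.exists_pos_norm_le
  obtain ⟨K, hK, hdecay⟩ := exists_norm_iteratedDeriv_le_of_polyDiffOp_eq_zero (κ := κ) hκ hR m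
  refine ⟨K * B, by positivity, κ, hκ, fun M hM N hN w hw i hi ξ hξ => ?_⟩
  have hinit (j : ℕ) (hj : j < m) : ‖iteratedDeriv j w 0‖ ≤ B := by
    rw [hw.2.2 ⟨j, hj⟩]
    exact (norm_le_pi_norm N _).trans (hB N hN)
  have hP (ξ : ℝ) (hξ : 0 ≤ ξ) :
      polyDiffOp ((charPoly m M).roots.map (X - C ·)).prod w ξ = 0 := by
    rw [← charPoly_eq_prod_roots]
    exact hw.polyDiffOp_charPoly_eq_zero hξ
  calc ‖iteratedDeriv i w ξ‖ ≤ K * B * Real.exp (-κ * ξ) :=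
        hdecay _ (card_roots_charPoly m M) (hbounds M hM) w hw.1 hP B hinit i hi ξ hξ
    _ ≤ K * B * (1 + ξ ^ (m - 1)) * Real.exp (-κ * ξ) := by
        refine mul_le_mul_of_nonneg_right (le_mul_of_one_le_right (by positivity) ?_)
          (Real.exp_pos _).le
        linarith [pow_nonneg hξ (m - 1)]

/-- if `D_a ⊆ ℂ^m` is closed and bounded and every root of the
characteristic polynomial has strictly negative real part for each `M ∈ D_a`, and
`D_w ⊆ ℂ^m` is bounded, then solutions decay like `C̃ (1 + ξ^{m-1}) e^{-κ ξ}`,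
uniformly in `M ∈ D_a` and `N ∈ D_w`. -/
theorem uniform_exp_decay_estimate (m : ℕ) (hm : 1 ≤ m)
    (Da : Set (Fin m → ℂ)) (hDaClosed : IsClosed Da) (hDaBdd : Bornology.IsBounded Da)
    (hroots : ∀ M ∈ Da, ∀ z ∈ (charPoly m M).roots, z.re < 0)
    (Dw : Set (Fin m → ℂ)) (hDwBdd : Bornology.IsBounded Dw) :
    ∃ Ct : ℝ, 0 ≤ Ct ∧ ∃ κ : ℝ, 0 < κ ∧
      ∀ M ∈ Da, ∀ N ∈ Dw,
        ∀ w : ℝ → ℂ, IsCauchySolution m M N w →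
          ∀ i < m, ∀ ξ : ℝ, 0 ≤ ξ →
            ‖iteratedDeriv i w ξ‖ ≤ Ct * (1 + ξ ^ (m - 1)) * Real.exp (-κ * ξ) :=
  uniform_exp_decay_estimate_general m Da hDaClosed hDaBdd hroots Dw hDwBdd
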